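/- arXiv:0805.0016 — 4 statements merged into one kernel-verified Lean document; each statement's English description precedes it below -/
import Mathlib

section
/- Let n be a positive integer divisible by 3, let Π be a 3-decomposable halfperiod on n elements with wings A, B, C, and let k be an integer with 1 ≤ k < n/2. Then the number of bichromatic (≤k)-critical transpositions of Π equals 3·binom(k+1,2) if k ≤ n/3, and equals 3·binom(n/3+1,2) + (k − n/3)·n if n/3 < k < n/2. -/
/-- A halfperiod on `n` elements: a sequence `pos 0, pos 1, …, pos (C(n,2))` of linear orderings
of `Fin n` (given by the position `pos t x` of element `x` at time `t`), where consecutive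
orderings differ by transposing the elements in positions `move t` and `move t + 1`, and the
final ordering is the reverse of the initial one. Positions are numbered `0, …, n-1`, so the
swap at step `t` is the paper's `(move t + 1)`-transposition. -/
structure Halfperiod (n : ℕ) where
  pos : ℕ → (Fin n ≃ Fin n)
  move : ℕ → ℕ
  move_lt : ∀ t, t < n.choose 2 → move t + 1 < n
  step : ∀ t, t < n.choose 2 → ∀ x : Fin n,
    ((pos (t + 1)) x : ℕ) =
      if ((pos t) x : ℕ) = move t then move t + 1
      else if ((pos t) x : ℕ) = move t + 1 then move t
      else ((pos t) x : ℕ)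
  reverse : ∀ x : Fin n, ((pos (n.choose 2)) x : ℕ) = n - 1 - ((pos 0) x : ℕ)

/-- A halfperiod is 3-decomposable with wings `A`, `B`, `C` if the wings partition the ground set
into three parts of size `n/3`, in the initial ordering all of `A` precedes all of `B`, which
precedes all of `C`, and there are indices `0 < s < t ≤ C(n,2)` such that at time `s+1` the
order of the wings is `B, A, C` and at time `t+1` it is `B, C, A`. -/
def Halfperiod.ThreeDecomp {n : ℕ} (H : Halfperiod n) (A B C : Finset (Fin n)) : Prop :=
  3 * A.card = n ∧ 3 * B.card = n ∧ 3 * C.card = n ∧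
  Disjoint A B ∧ Disjoint A C ∧ Disjoint B C ∧ A ∪ B ∪ C = Finset.univ ∧
  (∀ a ∈ A, ∀ b ∈ B, H.pos 0 a < H.pos 0 b) ∧
  (∀ b ∈ B, ∀ c ∈ C, H.pos 0 b < H.pos 0 c) ∧
  ∃ s t : ℕ, 0 < s ∧ s < t ∧ t ≤ n.choose 2 ∧
    (∀ b ∈ B, ∀ a ∈ A, H.pos (s + 1) b < H.pos (s + 1) a) ∧
    (∀ a ∈ A, ∀ c ∈ C, H.pos (s + 1) a < H.pos (s + 1) c) ∧
    (∀ b ∈ B, ∀ c ∈ C, H.pos (t + 1) b < H.pos (t + 1) c) ∧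
    (∀ c ∈ C, ∀ a ∈ A, H.pos (t + 1) c < H.pos (t + 1) a)

/-- The transposition at step `t` is `(≤ k)`-critical: it is an `i`-transposition or an
`(n-i)`-transposition for some `i ≤ k` (in the paper's 1-based indexing `i = move t + 1`). -/
def Halfperiod.CritAt {n : ℕ} (H : Halfperiod n) (k t : ℕ) : Prop :=
  H.move t + 1 ≤ k ∨ n - k ≤ H.move t + 1

/-- `NcritLe n k H` is the number of `(≤ k)`-critical transpositions of the halfperiod `H`. -/
noncomputable def NcritLe (n k : ℕ) (H : Halfperiod n) : ℕ :=
  Set.ncard {t : ℕ | t < n.choose 2 ∧ H.CritAt k t}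

/-- The transposition at step `t` is monochromatic with respect to the wings `A`, `B`, `C`:
the two exchanged elements (those in positions `move t` and `move t + 1` at time `t`)
belong to the same wing. -/
def Halfperiod.MonoAt {n : ℕ} (H : Halfperiod n) (A B C : Finset (Fin n)) (t : ℕ) : Prop :=
  ∀ x y : Fin n, (H.pos t x : ℕ) = H.move t → (H.pos t y : ℕ) = H.move t + 1 →
    ((x ∈ A ∧ y ∈ A) ∨ (x ∈ B ∧ y ∈ B) ∨ (x ∈ C ∧ y ∈ C))

/-- The number of bichromatic (i.e. not monochromatic) `(≤ k)`-critical transpositions. -/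
noncomputable def NcritBi (n k : ℕ) (H : Halfperiod n) (A B C : Finset (Fin n)) : ℕ :=
  Set.ncard {t : ℕ | t < n.choose 2 ∧ H.CritAt k t ∧ ¬ H.MonoAt A B C t}

/-!
Fix a level `v` and let `countBelow S v t` be the number of elements of a wing `S` among the
first `v` positions at time `t`. It changes only at a transposition between positions `v - 1` and
`v` that exchanges an element of `S` with an element outside `S`, and then by one. The wings are
in the orders `A B C`, `B A C` and `C B A` at time `0`, at time `s + 1` and at the end, which
determines the counts of `A` and of `C` at these times; their changes force at least
`min (2v) (n - v)` bichromatic transpositions at level `v`. These bounds add up to `3 (n/3)^2`,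
and there are at most that many bichromatic transpositions: every pair inside a wing is transposed
at some step and no step transposes two pairs, so at least `3 C(n/3, 2)` of the `C(n, 2)` steps
are monochromatic. Hence every level attains its bound, and summing the bounds over the critical
levels gives the formula.
-/

open Finset
open scoped Classical

theorem abs_sub_le_card_filter {f : ℕ → ℤ} {p : ℕ → Prop} [DecidablePred p] {a b : ℕ}
    (hab : a ≤ b) (hf : ∀ t ∈ Ico a b, |f (t + 1) - f t| ≤ if p t then 1 else 0) :
    |f b - f a| ≤ #{t ∈ Ico a b | p t} := by
  rw [← sum_Ico_sub f hab, natCast_card_filter]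
  exact (abs_sum_le_sum_abs _ _).trans (sum_le_sum hf)

theorem card_filter_lt_product {α β : Type*} [DecidableEq α] [LinearOrder β] (S : Finset α)
    {f : α → β} (hf : Set.InjOn f S) :
    #{p ∈ S ×ˢ S | f p.1 < f p.2} = (#S).choose 2 := by
  rw [← card_powersetCard]
  refine card_bij (fun p _ => {p.1, p.2}) ?_ ?_ ?_
  · rintro ⟨x, y⟩ h
    simp only [mem_filter, mem_product] at h
    rw [mem_powersetCard, card_pair (ne_of_apply_ne f h.2.ne)]
    exact ⟨insert_subset h.1.1 (singleton_subset_iff.2 h.1.2), rfl⟩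
  · rintro ⟨x, y⟩ h ⟨x', y'⟩ h' he
    simp only [mem_filter, mem_product] at h h'
    rw [← coe_inj, coe_pair, coe_pair, Set.pair_eq_pair_iff] at he
    rcases he with ⟨rfl, rfl⟩ | ⟨rfl, rfl⟩
    · rfl
    · exact absurd (h.2.trans h'.2) (lt_irrefl _)
  · intro T hT
    rw [mem_powersetCard, card_eq_two] at hT
    obtain ⟨hTS, x, y, hxy, rfl⟩ := hT
    have hx : x ∈ S := hTS (mem_insert_self x {y})
    have hy : y ∈ S := hTS (mem_insert_of_mem (mem_singleton_self y))
    rcases lt_or_gt_of_ne (hf.ne hx hy hxy) with h | h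
    · exact ⟨(x, y), by simp [hx, hy, h]⟩
    · exact ⟨(y, x), by simp [hx, hy, h], pair_comm y x⟩

theorem Nat.exists_lt_and_not_succ {P : ℕ → Prop} {N : ℕ} (h0 : P 0) (hN : ¬ P N) :
    ∃ t < N, P t ∧ ¬ P (t + 1) := by
  by_contra! h
  suffices ∀ t ≤ N, P t from hN (this N le_rfl)
  intro t ht
  induction t with
  | zero => exact h0
  | succ t ih => exact h t (by omega) (ih (by omega))

section InitialSegment

variable {α : Type*} [Fintype α] {n : ℕ}

theorem Equiv.card_filter_val_lt (e : α ≃ Fin n) (w : ℕ) :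
    #({x | (e x : ℕ) < w} : Finset α) = min n w := by
  rw [← Fin.card_filter_val_lt]
  exact card_equiv e (by simp)

theorem Equiv.filter_val_lt_card_eq (e : α ≃ Fin n) {S : Finset α}
    (hS : ∀ x ∈ S, ∀ y ∉ S, e x < e y) : ({x | (e x : ℕ) < #S} : Finset α) = S := by
  classical
  have hsub : S ⊆ ({x | (e x : ℕ) < #S} : Finset α) := by
    intro x hx
    have hlt : ({y | (e y : ℕ) < e x} : Finset α) ⊆ S.erase x := fun y hy => by
      simp only [mem_filter, mem_univ, true_and] at hy
      refine mem_erase.2 ⟨by rintro rfl; exact lt_irrefl _ hy, ?_⟩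
      by_contra hyS
      exact lt_asymm hy (hS x hx y hyS)
    have := card_le_card hlt
    rw [card_erase_of_mem hx, e.card_filter_val_lt, min_eq_right (e x).isLt.le] at this
    simp only [mem_filter, mem_univ, true_and]
    have := card_pos.2 ⟨x, hx⟩
    omega
  refine (eq_of_subset_of_card_le hsub ?_).symm
  rw [e.card_filter_val_lt]
  exact min_le_right _ _

end InitialSegment

theorem Nat.choose_two_three_mul (m : ℕ) : (3 * m).choose 2 = 3 * m.choose 2 + 3 * m ^ 2 := by
  have h := Nat.cast_choose_two ℚ (3 * m)
  have h' := Nat.cast_choose_two ℚ m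
  exact_mod_cast (show ((3 * m).choose 2 : ℚ) = 3 * m.choose 2 + 3 * m ^ 2 by
    rw [h, h']; push_cast; ring)

theorem sum_range_min_two_mul_sub (m : ℕ) :
    ∑ v ∈ range (3 * m), min (2 * v) (3 * m - v) = 3 * m ^ 2 := by
  rw [show 3 * m = m + 2 * m by ring, sum_range_add]
  have h₁ : ∑ v ∈ range m, min (2 * v) (m + 2 * m - v) = 2 * ∑ v ∈ range m, v := by
    rw [mul_sum]
    exact sum_congr rfl fun v hv => by rw [mem_range] at hv; omega
  have h₂ : ∑ x ∈ range (2 * m), min (2 * (m + x)) (m + 2 * m - (m + x)) =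
      ∑ x ∈ range (2 * m), (2 * m - 1 - x + 1) :=
    sum_congr rfl fun x hx => by rw [mem_range] at hx; omega
  rw [h₁, h₂, sum_range_reflect (fun x => x + 1), sum_add_distrib, sum_const, card_range,
    smul_eq_mul, mul_one]
  have g₁ := sum_range_id_mul_two m
  have g₂ := sum_range_id_mul_two (2 * m)
  rcases m with _ | m
  · simp
  rw [Nat.add_sub_cancel] at g₁
  rw [show 2 * (m + 1) - 1 = 2 * m + 1 by omega] at g₂
  nlinarith

theorem sum_range_min_two_mul_sub_pair_of_le {n k : ℕ} (hk : k ≤ n / 3) :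
    ∑ i ∈ range k, (min (2 * (i + 1)) (n - (i + 1)) + min (2 * (n - 1 - i)) (n - (n - 1 - i))) =
      3 * (k + 1).choose 2 := by
  induction k with
  | zero => simp
  | succ k ih =>
    have h : (k + 1 + 1).choose 2 = (k + 1).choose 2 + (k + 1) := by
      rw [Nat.choose_succ_succ', Nat.choose_one_right, add_comm]
    rw [sum_range_succ, ih (by omega), h]
    omega

theorem sum_range_min_two_mul_sub_pair_of_ge {n k : ℕ} (hk : n / 3 ≤ k) (hkn : 2 * k < n) :
    ∑ i ∈ range k, (min (2 * (i + 1)) (n - (i + 1)) + min (2 * (n - 1 - i)) (n - (n - 1 - i))) =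
      3 * (n / 3 + 1).choose 2 + (k - n / 3) * n := by
  induction k, hk using Nat.le_induction with
  | base => rw [sum_range_min_two_mul_sub_pair_of_le le_rfl, Nat.sub_self, zero_mul, add_zero]
  | succ k hk ih =>
    rw [sum_range_succ, ih (by omega), show k + 1 - n / 3 = k - n / 3 + 1 by omega, add_mul,
      one_mul]
    omega

theorem sum_Ico_union_Ico {M : Type*} [AddCommMonoid M] (f : ℕ → M) {n k : ℕ} (hk : 2 * k < n) :
    ∑ v ∈ Ico 1 (k + 1) ∪ Ico (n - k) n, f v = ∑ i ∈ range k, (f (i + 1) + f (n - 1 - i)) := by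
  rw [sum_union (disjoint_left.2 fun v h₁ h₂ => by rw [mem_Ico] at h₁ h₂; omega),
    sum_add_distrib, sum_Ico_eq_sum_range, sum_Ico_eq_sum_range, Nat.add_sub_cancel,
    Nat.sub_sub_self (by omega : k ≤ n)]
  congr 1
  · exact sum_congr rfl fun i _ => by rw [add_comm]
  · rw [← sum_range_reflect]
    exact sum_congr rfl fun i hi => by rw [mem_range] at hi; congr 1; omega

namespace Halfperiod

variable {n : ℕ}

def Swaps (H : Halfperiod n) (t : ℕ) (x y : Fin n) : Prop :=
  (H.pos t x : ℕ) = H.move t ∧ (H.pos t y : ℕ) = H.move t + 1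

def Precedes (H : Halfperiod n) (t : ℕ) (P Q : Finset (Fin n)) : Prop :=
  ∀ p ∈ P, ∀ q ∈ Q, H.pos t p < H.pos t q

def countBelow (H : Halfperiod n) (S : Finset (Fin n)) (w t : ℕ) : ℕ :=
  #{x ∈ S | (H.pos t x : ℕ) < w}

def Separates (H : Halfperiod n) (S : Finset (Fin n)) (t : ℕ) : Prop :=
  ∃ x y, H.Swaps t x y ∧ ¬ (x ∈ S ↔ y ∈ S)

noncomputable def stepsWithin (H : Halfperiod n) (S : Finset (Fin n)) : Finset ℕ :=
  {t ∈ range (n.choose 2) | ∀ x y, H.Swaps t x y → x ∈ S ∧ y ∈ S}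

/-- The number of bichromatic transpositions between positions `v - 1` and `v`, that is, of
bichromatic `v`-transpositions in the paper's numbering. -/
noncomputable def biCount (H : Halfperiod n) (A B C : Finset (Fin n)) (v : ℕ) : ℕ :=
  #{t ∈ range (n.choose 2) | H.move t + 1 = v ∧ ¬ H.MonoAt A B C t}

theorem pos_injective {H : Halfperiod n} {t : ℕ} {x y : Fin n}
    (h : (H.pos t x : ℕ) = H.pos t y) : x = y :=
  (H.pos t).injective (Fin.ext h)

theorem exists_swaps (H : Halfperiod n) {t : ℕ} (ht : t < n.choose 2) :
    ∃ x y, H.Swaps t x y := by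
  have := H.move_lt t ht
  exact ⟨(H.pos t).symm ⟨H.move t, by omega⟩, (H.pos t).symm ⟨H.move t + 1, this⟩,
    by simp, by simp⟩

theorem Swaps.unique {H : Halfperiod n} {t : ℕ} {x y x' y' : Fin n} (h : H.Swaps t x y)
    (h' : H.Swaps t x' y') : x = x' ∧ y = y' :=
  ⟨pos_injective (h.1.trans h'.1.symm), pos_injective (h.2.trans h'.2.symm)⟩

theorem Swaps.pos_succ {H : Halfperiod n} {t : ℕ} (ht : t < n.choose 2) {x y : Fin n}
    (h : H.Swaps t x y) (z : Fin n) : H.pos (t + 1) z = H.pos t (Equiv.swap x y z) := by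
  have hxy : x ≠ y := by rintro rfl; have := h.1.symm.trans h.2; omega
  ext
  rw [H.step t ht z]
  rcases eq_or_ne z x with rfl | hzx
  · simp [h.1, h.2]
  rcases eq_or_ne z y with rfl | hzy
  · simp [h.1, h.2]
  rw [Equiv.swap_apply_of_ne_of_ne hzx hzy]
  have h1 : (H.pos t z : ℕ) ≠ H.move t := fun e => hzx (pos_injective (e.trans h.1.symm))
  have h2 : (H.pos t z : ℕ) ≠ H.move t + 1 := fun e => hzy (pos_injective (e.trans h.2.symm))
  simp [h1, h2]

theorem pos_le_pos_succ_or (H : Halfperiod n) {t : ℕ} (ht : t < n.choose 2) (z : Fin n) :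
    (H.pos t z : ℕ) ≤ H.pos (t + 1) z ∨ (H.pos t z : ℕ) = H.move t + 1 := by
  have := H.step t ht z
  split_ifs at this <;> omega

theorem pos_succ_le_pos_or (H : Halfperiod n) {t : ℕ} (ht : t < n.choose 2) (z : Fin n) :
    (H.pos (t + 1) z : ℕ) ≤ H.pos t z ∨ (H.pos t z : ℕ) = H.move t := by
  have := H.step t ht z
  split_ifs at this <;> omega

theorem swaps_of_lt_of_not_lt {H : Halfperiod n} {t : ℕ} (ht : t < n.choose 2) {x y : Fin n}
    (h : H.pos t x < H.pos t y) (h' : ¬ H.pos (t + 1) x < H.pos (t + 1) y) : H.Swaps t x y := by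
  rw [Fin.lt_def] at h h'
  have hx := H.step t ht x
  have hy := H.step t ht y
  constructor <;> split_ifs at hx hy <;> omega

theorem exists_swaps_of_pos_zero_lt {H : Halfperiod n} {x y : Fin n}
    (h : H.pos 0 x < H.pos 0 y) : ∃ t < n.choose 2, H.Swaps t x y := by
  have hN : ¬ H.pos (n.choose 2) x < H.pos (n.choose 2) y := by
    rw [Fin.lt_def, H.reverse x, H.reverse y]
    rw [Fin.lt_def] at h
    omega
  obtain ⟨t, ht, hlt, hnlt⟩ :=
    Nat.exists_lt_and_not_succ (P := fun u => H.pos u x < H.pos u y) h hN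
  exact ⟨t, ht, swaps_of_lt_of_not_lt ht hlt hnlt⟩

theorem Precedes.trans {H : Halfperiod n} {t : ℕ} {P Q R : Finset (Fin n)} (hQ : Q.Nonempty)
    (h₁ : H.Precedes t P Q) (h₂ : H.Precedes t Q R) : H.Precedes t P R :=
  fun p hp r hr => (h₁ p hp _ hQ.choose_spec).trans (h₂ _ hQ.choose_spec r hr)

theorem Precedes.reverse {H : Halfperiod n} {P Q : Finset (Fin n)} (h : H.Precedes 0 P Q) :
    H.Precedes (n.choose 2) Q P := fun q hq p hp => by
  have := h p hp q hq
  rw [Fin.lt_def] at this ⊢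
  rw [H.reverse p, H.reverse q]
  omega

theorem countBelow_union (H : Halfperiod n) {S T : Finset (Fin n)} (h : Disjoint S T) (w t : ℕ) :
    H.countBelow (S ∪ T) w t = H.countBelow S w t + H.countBelow T w t := by
  rw [countBelow, filter_union, card_union_of_disjoint (disjoint_filter_filter h)]
  rfl

theorem countBelow_univ (H : Halfperiod n) (w t : ℕ) : H.countBelow univ w t = min n w :=
  (H.pos t).card_filter_val_lt w

theorem countBelow_of_forall_lt {H : Halfperiod n} {S : Finset (Fin n)} {t : ℕ}
    (hS : ∀ x ∈ S, ∀ y ∉ S, H.pos t x < H.pos t y) (w : ℕ) :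
    H.countBelow S w t = min w #S := by
  have hSn : #S ≤ n := (card_le_univ S).trans_eq (Fintype.card_fin n)
  conv_lhs => rw [countBelow, ← (H.pos t).filter_val_lt_card_eq hS, filter_filter]
  simp_rw [← lt_min_iff, min_comm (#S)]
  rw [(H.pos t).card_filter_val_lt]
  omega

theorem countBelow_of_precedes {H : Halfperiod n} {P Q R : Finset (Fin n)} {t : ℕ}
    (hPQ : Disjoint P Q) (hPR : Disjoint P R) (hQR : Disjoint Q R) (hU : P ∪ Q ∪ R = univ)
    (h₁ : H.Precedes t P Q) (h₂ : H.Precedes t Q R) (h₃ : H.Precedes t P R) (w : ℕ) :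
    H.countBelow P w t = min w #P ∧
      H.countBelow Q w t = min w (#P + #Q) - min w #P ∧
      H.countBelow R w t = min n w - min w (#P + #Q) := by
  have hmem : ∀ y, y ∉ P ∪ Q → y ∈ R := fun y hy => by
    have : y ∈ P ∪ Q ∪ R := hU ▸ mem_univ y
    rw [mem_union] at this
    exact this.resolve_left hy
  have hP : H.countBelow P w t = min w #P := by
    refine countBelow_of_forall_lt (fun x hx y hy => ?_) w
    by_cases hyQ : y ∈ Q
    · exact h₁ x hx y hyQ
    · exact h₃ x hx y (hmem y (by simp [hy, hyQ]))
  have hPQ' : H.countBelow (P ∪ Q) w t = min w (#P + #Q) := by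
    rw [← card_union_of_disjoint hPQ]
    refine countBelow_of_forall_lt (fun x hx y hy => ?_) w
    rcases mem_union.1 hx with hx | hx
    · exact h₃ x hx y (hmem y hy)
    · exact h₂ x hx y (hmem y hy)
  have hall := H.countBelow_univ w t
  rw [← hU, H.countBelow_union (disjoint_union_left.2 ⟨hPR, hQR⟩)] at hall
  rw [H.countBelow_union hPQ] at hPQ' hall
  omega

theorem countBelow_succ_of_move_ne (H : Halfperiod n) {S : Finset (Fin n)} {w t : ℕ}
    (ht : t < n.choose 2) (hw : H.move t + 1 ≠ w) :
    H.countBelow S w (t + 1) = H.countBelow S w t := by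
  refine congrArg card (filter_congr fun x _ => ?_)
  have := H.step t ht x
  split_ifs at this <;> omega

theorem countBelow_succ_of_not_separates {H : Halfperiod n} {S : Finset (Fin n)} {t : ℕ}
    (ht : t < n.choose 2) (hS : ¬ H.Separates S t) (w : ℕ) :
    H.countBelow S w (t + 1) = H.countBelow S w t := by
  obtain ⟨x, y, hxy⟩ := H.exists_swaps ht
  have hmem : ∀ z, z ∈ S ↔ Equiv.swap x y z ∈ S := by
    have : x ∈ S ↔ y ∈ S := by by_contra h; exact hS ⟨x, y, hxy, h⟩
    intro z
    rcases eq_or_ne z x with rfl | hzx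
    · simpa using this
    rcases eq_or_ne z y with rfl | hzy
    · simpa using this.symm
    rw [Equiv.swap_apply_of_ne_of_ne hzx hzy]
  refine card_equiv (Equiv.swap x y) fun z => ?_
  simp only [mem_filter, hxy.pos_succ ht, ← hmem]

theorem countBelow_succ_le (H : Halfperiod n) {S : Finset (Fin n)} {t : ℕ}
    (ht : t < n.choose 2) (w : ℕ) : H.countBelow S w (t + 1) ≤ H.countBelow S w t + 1 := by
  obtain ⟨x, y, hxy⟩ := H.exists_swaps ht
  calc H.countBelow S w (t + 1) ≤ #(insert y {z ∈ S | (H.pos t z : ℕ) < w}) :=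
        card_le_card fun z hz => by
          rw [mem_filter] at hz
          rcases H.pos_le_pos_succ_or ht z with h | h
          · exact mem_insert_of_mem (mem_filter.2 ⟨hz.1, by omega⟩)
          · rw [pos_injective (h.trans hxy.2.symm)]; exact mem_insert_self _ _
    _ ≤ H.countBelow S w t + 1 := card_insert_le _ _

theorem countBelow_le_succ (H : Halfperiod n) {S : Finset (Fin n)} {t : ℕ}
    (ht : t < n.choose 2) (w : ℕ) : H.countBelow S w t ≤ H.countBelow S w (t + 1) + 1 := by
  obtain ⟨x, y, hxy⟩ := H.exists_swaps ht
  calc H.countBelow S w t ≤ #(insert x {z ∈ S | (H.pos (t + 1) z : ℕ) < w}) :=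
        card_le_card fun z hz => by
          rw [mem_filter] at hz
          rcases H.pos_succ_le_pos_or ht z with h | h
          · exact mem_insert_of_mem (mem_filter.2 ⟨hz.1, by omega⟩)
          · rw [pos_injective (h.trans hxy.1.symm)]; exact mem_insert_self _ _
    _ ≤ H.countBelow S w (t + 1) + 1 := card_insert_le _ _

theorem abs_countBelow_succ_sub_le (H : Halfperiod n) (S : Finset (Fin n)) {w t : ℕ}
    (ht : t < n.choose 2) :
    |(H.countBelow S w (t + 1) : ℤ) - H.countBelow S w t| ≤
      if H.move t + 1 = w ∧ H.Separates S t then 1 else 0 := by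
  split_ifs with h
  · have := H.countBelow_succ_le (S := S) ht w
    have := H.countBelow_le_succ (S := S) ht w
    rw [abs_le]
    omega
  · rcases not_and_or.1 h with h | h
    · rw [H.countBelow_succ_of_move_ne ht h, sub_self, abs_zero]
    · rw [countBelow_succ_of_not_separates ht h, sub_self, abs_zero]

theorem abs_countBelow_sub_le (H : Halfperiod n) (S : Finset (Fin n)) (w : ℕ) {t₁ t₂ : ℕ}
    (h₁₂ : t₁ ≤ t₂) (h₂ : t₂ ≤ n.choose 2) :
    |(H.countBelow S w t₂ : ℤ) - H.countBelow S w t₁| ≤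
      #{t ∈ Ico t₁ t₂ | H.move t + 1 = w ∧ H.Separates S t} :=
  abs_sub_le_card_filter (f := fun t => (H.countBelow S w t : ℤ)) h₁₂ fun _ ht =>
    H.abs_countBelow_succ_sub_le S (lt_of_lt_of_le (mem_Ico.1 ht).2 h₂)

theorem not_separates_of_monoAt {H : Halfperiod n} {A B C S : Finset (Fin n)} {t : ℕ}
    (hAB : Disjoint A B) (hAC : Disjoint A C) (hBC : Disjoint B C) (hS : S = A ∨ S = B ∨ S = C)
    (h : H.MonoAt A B C t) : ¬ H.Separates S t := by
  rintro ⟨x, y, hxy, hsep⟩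
  have hAB := disjoint_left.1 hAB
  have hAC := disjoint_left.1 hAC
  have hBC := disjoint_left.1 hBC
  rcases h x y hxy.1 hxy.2 with ⟨hx, hy⟩ | ⟨hx, hy⟩ | ⟨hx, hy⟩ <;>
    rcases hS with rfl | rfl | rfl <;> grind

theorem ThreeDecomp.min_le_biCount {H : Halfperiod n} {A B C : Finset (Fin n)}
    (hd : H.ThreeDecomp A B C) {v : ℕ} (hv : v < n) :
    min (2 * v) (n - v) ≤ H.biCount A B C v := by
  obtain ⟨hA, hB, hC, hAB, hAC, hBC, hU, h₀AB, h₀BC, s, t, -, hst, htN, h₁BA, h₁AC, -⟩ := hd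
  have hAne : A.Nonempty := card_pos.1 (by omega)
  have hBne : B.Nonempty := card_pos.1 (by omega)
  have h₀AC := Precedes.trans hBne h₀AB h₀BC
  obtain ⟨hA₀, -, -⟩ := countBelow_of_precedes hAB hAC hBC hU h₀AB h₀BC h₀AC v
  obtain ⟨-, hA₁, hC₁⟩ := countBelow_of_precedes hAB.symm hBC hAC
    (by rwa [union_comm B A]) h₁BA h₁AC (Precedes.trans hAne h₁BA h₁AC) v
  obtain ⟨hCN, -, -⟩ := countBelow_of_precedes hBC.symm hAC.symm hAB.symm
    (by rw [← hU]; ext; simp only [mem_union]; tauto)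
    (Precedes.reverse h₀BC) (Precedes.reverse h₀AB) h₀AC.reverse v
  have hsep : ∀ {S} (I : Finset ℕ), S = A ∨ S = B ∨ S = C →
      #{t ∈ I | H.move t + 1 = v ∧ H.Separates S t} ≤
        #{t ∈ I | H.move t + 1 = v ∧ ¬ H.MonoAt A B C t} := fun I hS =>
    card_le_card fun t ht => by
      rw [mem_filter] at ht ⊢
      exact ⟨ht.1, ht.2.1, fun hm => not_separates_of_monoAt hAB hAC hBC hS hm ht.2.2⟩
  have hsplit : H.biCount A B C v =
      #{t ∈ Ico 0 (s + 1) | H.move t + 1 = v ∧ ¬ H.MonoAt A B C t} +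
        #{t ∈ Ico (s + 1) (n.choose 2) | H.move t + 1 = v ∧ ¬ H.MonoAt A B C t} := by
    simp only [biCount, range_eq_Ico, card_filter]
    exact (sum_Ico_consecutive _ (Nat.zero_le _) (by omega)).symm
  have hΔA := abs_le.1 (H.abs_countBelow_sub_le A v (Nat.zero_le (s + 1)) (by omega))
  have hΔC := abs_le.1 (H.abs_countBelow_sub_le C v (by omega : s + 1 ≤ n.choose 2) le_rfl)
  have := hsep (Ico 0 (s + 1)) (Or.inl rfl)
  have := hsep (Ico (s + 1) (n.choose 2)) (Or.inr (Or.inr rfl))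
  rw [hA₀, hA₁] at hΔA
  rw [hC₁, hCN] at hΔC
  omega

theorem disjoint_stepsWithin (H : Halfperiod n) {S T : Finset (Fin n)} (h : Disjoint S T) :
    Disjoint (H.stepsWithin S) (H.stepsWithin T) :=
  disjoint_left.2 fun t hS hT => by
    rw [stepsWithin, mem_filter, mem_range] at hS hT
    obtain ⟨x, y, hxy⟩ := H.exists_swaps hS.1
    exact disjoint_left.1 h (hS.2 x y hxy).1 (hT.2 x y hxy).1

/-- Each pair of elements of `S` is transposed at some step, and no step transposes two pairs. -/
theorem choose_two_le_card_stepsWithin (H : Halfperiod n) (S : Finset (Fin n)) :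
    (#S).choose 2 ≤ #(H.stepsWithin S) := by
  rw [← card_filter_lt_product S (H.pos 0).injective.injOn]
  refine card_le_card_of_forall_subsingleton (fun p t => H.Swaps t p.1 p.2) ?_ ?_
  · rintro ⟨x, y⟩ hp
    rw [mem_filter, mem_product] at hp
    obtain ⟨t, ht, hxy⟩ := exists_swaps_of_pos_zero_lt hp.2
    refine ⟨t, mem_filter.2 ⟨mem_range.2 ht, fun x' y' h' => ?_⟩, hxy⟩
    obtain ⟨rfl, rfl⟩ := hxy.unique h'
    exact hp.1
  · rintro t - ⟨x, y⟩ ⟨-, hxy⟩ ⟨x', y'⟩ ⟨-, hxy'⟩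
    obtain ⟨rfl, rfl⟩ := hxy.unique hxy'
    rfl

theorem ThreeDecomp.card_bichromatic_le {H : Halfperiod n} {A B C : Finset (Fin n)}
    (hd : H.ThreeDecomp A B C) :
    #{t ∈ range (n.choose 2) | ¬ H.MonoAt A B C t} ≤ 3 * #A ^ 2 := by
  obtain ⟨hA, hB, hC, hAB, hAC, hBC, -⟩ := hd
  have hmono : H.stepsWithin A ∪ H.stepsWithin B ∪ H.stepsWithin C ⊆
      {t ∈ range (n.choose 2) | H.MonoAt A B C t} := fun t ht => by
    simp only [stepsWithin, mem_union, mem_filter] at ht ⊢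
    refine ⟨by tauto, fun x y hx hy => ?_⟩
    rcases ht with (⟨-, h⟩ | ⟨-, h⟩) | ⟨-, h⟩ <;> simp [h x y ⟨hx, hy⟩]
  have hcard := card_le_card hmono
  rw [card_union_of_disjoint (disjoint_union_left.2 ⟨H.disjoint_stepsWithin hAC,
    H.disjoint_stepsWithin hBC⟩), card_union_of_disjoint (H.disjoint_stepsWithin hAB)] at hcard
  have hsplit := card_filter_add_card_filter_not (s := range (n.choose 2))
    (fun t => H.MonoAt A B C t)
  have hWA := H.choose_two_le_card_stepsWithin A
  have hWB := H.choose_two_le_card_stepsWithin B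
  have hWC := H.choose_two_le_card_stepsWithin C
  rw [show #B = #A by omega] at hWB
  rw [show #C = #A by omega] at hWC
  have hN := Nat.choose_two_three_mul #A
  rw [hA] at hN
  rw [card_range] at hsplit
  omega

theorem sum_biCount (H : Halfperiod n) (A B C : Finset (Fin n)) (L : Finset ℕ) :
    ∑ v ∈ L, H.biCount A B C v =
      #{t ∈ range (n.choose 2) | H.move t + 1 ∈ L ∧ ¬ H.MonoAt A B C t} := by
  rw [card_eq_sum_card_fiberwise (f := fun t => H.move t + 1) (t := L)
    fun t ht => (mem_filter.1 ht).2.1]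
  refine sum_congr rfl fun v hv => ?_
  rw [biCount, filter_filter]
  refine congrArg card (filter_congr fun t _ => ?_)
  constructor
  · rintro ⟨rfl, h⟩; exact ⟨⟨hv, h⟩, rfl⟩
  · rintro ⟨⟨-, h⟩, rfl⟩; exact ⟨rfl, h⟩

theorem ThreeDecomp.biCount_eq {H : Halfperiod n} {A B C : Finset (Fin n)}
    (hd : H.ThreeDecomp A B C) {v : ℕ} (hv : v < n) :
    H.biCount A B C v = min (2 * v) (n - v) := by
  have hle : ∀ u ∈ range n, min (2 * u) (n - u) ≤ H.biCount A B C u :=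
    fun u hu => hd.min_le_biCount (mem_range.1 hu)
  have hall : ∑ u ∈ range n, H.biCount A B C u =
      #{t ∈ range (n.choose 2) | ¬ H.MonoAt A B C t} := by
    rw [sum_biCount]
    refine congrArg card (filter_congr fun t ht => ?_)
    have := H.move_lt t (mem_range.1 ht)
    simp only [mem_range, and_iff_right_iff_imp]
    omega
  have hmin := sum_range_min_two_mul_sub #A
  rw [hd.1] at hmin
  have hsum : ∑ u ∈ range n, H.biCount A B C u ≤ ∑ u ∈ range n, min (2 * u) (n - u) := by
    rw [hall, hmin]
    exact hd.card_bichromatic_le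
  exact ((sum_eq_sum_iff_of_le hle).1 (le_antisymm (sum_le_sum hle) hsum) v
    (mem_range.2 hv)).symm

end Halfperiod

theorem NcritBi_eq_sum_biCount (n k : ℕ) (H : Halfperiod n) (A B C : Finset (Fin n)) :
    NcritBi n k H A B C = ∑ v ∈ Ico 1 (k + 1) ∪ Ico (n - k) n, H.biCount A B C v := by
  rw [NcritBi, H.sum_biCount, ← Set.ncard_coe_finset, coe_filter]
  congr 1
  ext t
  simp only [Set.mem_ofPred_eq, mem_range]
  refine and_congr_right fun ht => and_congr_left fun _ => ?_
  have := H.move_lt t ht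
  simp only [Halfperiod.CritAt, mem_union, mem_Ico]
  omega

theorem NcritBi_of_threeDecomposable_general (n k : ℕ) (hk2 : 2 * k < n)
    (H : Halfperiod n) (A B C : Finset (Fin n)) (hdec : H.ThreeDecomp A B C) :
    (k ≤ n / 3 → NcritBi n k H A B C = 3 * (k + 1).choose 2) ∧
    (n / 3 < k → NcritBi n k H A B C = 3 * (n / 3 + 1).choose 2 + (k - n / 3) * n) := by
  have hlevels : ∀ i ∈ range k, H.biCount A B C (i + 1) + H.biCount A B C (n - 1 - i) =
      min (2 * (i + 1)) (n - (i + 1)) + min (2 * (n - 1 - i)) (n - (n - 1 - i)) := fun i hi => by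
    rw [mem_range] at hi
    rw [hdec.biCount_eq (by omega), hdec.biCount_eq (by omega)]
  rw [NcritBi_eq_sum_biCount, sum_Ico_union_Ico _ hk2, sum_congr rfl hlevels]
  exact ⟨sum_range_min_two_mul_sub_pair_of_le,
    fun hk => sum_range_min_two_mul_sub_pair_of_ge hk.le hk2⟩

/-- For a 3-decomposable halfperiod on `n` points (with `3 ∣ n`) and `1 ≤ k < n/2`, the number of
bichromatic `(≤ k)`-critical transpositions is `3·C(k+1,2)` when `k ≤ n/3`, and
`3·C(n/3+1,2) + (k − n/3)·n` when `n/3 < k < n/2`. -/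
theorem NcritBi_of_threeDecomposable (n k : ℕ) (hn : 0 < n) (h3 : 3 ∣ n)
    (hk1 : 1 ≤ k) (hk2 : 2 * k < n)
    (H : Halfperiod n) (A B C : Finset (Fin n)) (hdec : H.ThreeDecomp A B C) :
    (k ≤ n / 3 → NcritBi n k H A B C = 3 * (k + 1).choose 2) ∧
    (n / 3 < k → NcritBi n k H A B C = 3 * (n / 3 + 1).choose 2 + (k - n / 3) * n) :=
  NcritBi_of_threeDecomposable_general n k hk2 H A B C hdec
end

section
/- Let n be a positive integer divisible by 3, let Π be a 3-decomposable halfperiod on n elements with wings A = {a₁,…,a_{n/3}}, B, C, and let k be an integer with n/3 < k < n/2. Let D_k be the digraph on vertex set {1,2,…,n/3} with an arc from i to j if and only if i < j and the transposition exchanging a_i and a_j occurs in the k-center of Π. Then for every vertex i of D_k, its outdegree [i]⁺ and indegree [i]⁻ satisfy [i]⁺ ≤ min{ n − 2k − 1 + [i]⁻ , n/3 − i }. -/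
/-- `DkArc H k i j` holds (for `1 ≤ i < j ≤ n/3`) when the transposition exchanging `a_i` and
`a_j` occurs in the `k`-center of `H`; here `a_i` denotes the element occupying position `i`
(1-based) in the initial ordering, and a transposition between positions `p` and `p+1` (0-based)
occurs in the `k`-center when `k < p + 1 < n − k`. -/
def DkArc {n : ℕ} (H : Halfperiod n) (k i j : ℕ) : Prop :=
  i < j ∧ ∃ t : ℕ, t < n.choose 2 ∧ k < H.move t + 1 ∧ H.move t + 1 < n - k ∧
    ∃ x y : Fin n, (H.pos 0 x : ℕ) = i - 1 ∧ (H.pos 0 y : ℕ) = j - 1 ∧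
      (((H.pos t x : ℕ) = H.move t ∧ (H.pos t y : ℕ) = H.move t + 1) ∨
       ((H.pos t y : ℕ) = H.move t ∧ (H.pos t x : ℕ) = H.move t + 1))

/-- The outdegree of vertex `i` in the digraph `D_k` on vertex set `{1, …, n/3}`. -/
noncomputable def DkOutdeg {n : ℕ} (H : Halfperiod n) (k i : ℕ) : ℕ :=
  Set.ncard {j : ℕ | 1 ≤ j ∧ j ≤ n / 3 ∧ DkArc H k i j}

/-- The indegree of vertex `i` in the digraph `D_k` on vertex set `{1, …, n/3}`. -/
noncomputable def DkIndeg {n : ℕ} (H : Halfperiod n) (k i : ℕ) : ℕ :=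
  Set.ncard {j : ℕ | 1 ≤ j ∧ j ≤ n / 3 ∧ DkArc H k j i}

/-!
Let `a` be the element initially in position `i - 1`. During a halfperiod every pair is
transposed exactly once, from its initial order into the reverse one: each of the `C(n, 2)`
initially ordered pairs has to be inverted at some step, and there are only `C(n, 2)` steps.
Hence the out-neighbours of `i` give distinct steps at which `a` moves one place to the right
inside the `k`-center, and the steps at which `a` moves one place to the left inside the
`k`-center give distinct in-neighbours. As `a` travels from position `i - 1 ≤ k` to
`n - i ≥ n - k - 1`, it crosses each of the `n - 2k - 1` central transpositions once more to the
right than to the left.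
-/

open Finset

def upSteps (f : ℕ → ℕ) (N lo hi : ℕ) : Finset ℕ :=
  {u ∈ range N | lo ≤ f u ∧ f u < hi ∧ f (u + 1) = f u + 1}

def downSteps (f : ℕ → ℕ) (N lo hi : ℕ) : Finset ℕ :=
  {u ∈ range N | lo ≤ f (u + 1) ∧ f (u + 1) < hi ∧ f u = f (u + 1) + 1}

theorem card_upSteps_eq {f : ℕ → ℕ} {N lo hi : ℕ}
    (hf : ∀ u < N, f (u + 1) ≤ f u + 1 ∧ f u ≤ f (u + 1) + 1)
    (h0 : f 0 ≤ lo) (hN : hi ≤ f N) :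
    #(upSteps f N lo hi) = #(downSteps f N lo hi) + (hi - lo) := by
  -- telescope the walk clamped to `[lo, hi]`
  let c : ℕ → ℤ := fun u => max lo (min (f u) hi)
  have hterm : ∀ u ∈ range N, c (u + 1) - c u =
      (if lo ≤ f u ∧ f u < hi ∧ f (u + 1) = f u + 1 then 1 else 0) -
      (if lo ≤ f (u + 1) ∧ f (u + 1) < hi ∧ f u = f (u + 1) + 1 then 1 else 0) := by
    intro u hu
    have := hf u (mem_range.1 hu)
    simp only [c]
    split_ifs <;> omega
  have htele := sum_range_sub c N
  rw [sum_congr rfl hterm, sum_sub_distrib, sum_boole, sum_boole] at htele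
  simp only [upSteps, downSteps, c] at htele ⊢
  omega

namespace Halfperiod

variable {n : ℕ} (H : Halfperiod n)

def SwapsAt (u : ℕ) (x y : Fin n) : Prop :=
  (H.pos u x : ℕ) = H.move u ∧ (H.pos u y : ℕ) = H.move u + 1

variable {H}

theorem pos_succ_le_and_le {u : ℕ} (hu : u < n.choose 2) (x : Fin n) :
    (H.pos (u + 1) x : ℕ) ≤ H.pos u x + 1 ∧ (H.pos u x : ℕ) ≤ H.pos (u + 1) x + 1 := by
  have := H.step u hu x
  split_ifs at this <;> omega

theorem pos_succ_eq_add_one_iff {u : ℕ} (hu : u < n.choose 2) (x : Fin n) :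
    (H.pos (u + 1) x : ℕ) = H.pos u x + 1 ↔ (H.pos u x : ℕ) = H.move u := by
  have := H.step u hu x
  split_ifs at this <;> omega

theorem pos_eq_pos_succ_add_one_iff {u : ℕ} (hu : u < n.choose 2) (x : Fin n) :
    (H.pos u x : ℕ) = H.pos (u + 1) x + 1 ↔ (H.pos u x : ℕ) = H.move u + 1 := by
  have := H.step u hu x
  split_ifs at this <;> omega

theorem swapsAt_of_lt_of_lt {u : ℕ} (hu : u < n.choose 2) {x y : Fin n}
    (hbefore : (H.pos u x : ℕ) < H.pos u y) (hafter : (H.pos (u + 1) y : ℕ) < H.pos (u + 1) x) :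
    H.SwapsAt u x y := by
  have hx := H.step u hu x
  have hy := H.step u hu y
  unfold SwapsAt
  split_ifs at hx hy <;> omega

theorem exists_swapsAt_of_lt {x y : Fin n} (hxy : (H.pos 0 x : ℕ) < H.pos 0 y) :
    ∃ u < n.choose 2, H.SwapsAt u x y := by
  have hrev : ∃ m, (H.pos m y : ℕ) < H.pos m x :=
    ⟨n.choose 2, by rw [H.reverse, H.reverse]; omega⟩
  have hfirst := Nat.find_spec hrev
  have hN := Nat.find_min' hrev (m := n.choose 2) (by rw [H.reverse, H.reverse]; omega)
  obtain ⟨u, hu⟩ : ∃ u, Nat.find hrev = u + 1 :=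
    Nat.exists_eq_add_one_of_ne_zero fun h => by rw [h] at hfirst; omega
  have hlast := Nat.find_min hrev (show u < Nat.find hrev by omega)
  rw [hu] at hfirst hN
  have hne : (H.pos u x : ℕ) ≠ H.pos u y :=
    Fin.val_injective.ne ((H.pos u).injective.ne (by rintro rfl; omega))
  exact ⟨u, by omega, swapsAt_of_lt_of_lt (by omega) (by omega) hfirst⟩

variable (H) in
def swapped (u : Fin (n.choose 2)) : Fin n × Fin n :=
  ((H.pos u).symm ⟨H.move u, (H.move u).lt_add_one.trans (H.move_lt u u.2)⟩,
    (H.pos u).symm ⟨H.move u + 1, H.move_lt u u.2⟩)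

theorem swapped_eq_iff {u : Fin (n.choose 2)} {x y : Fin n} :
    H.swapped u = (x, y) ↔ H.SwapsAt u x y := by
  simp only [swapped, SwapsAt, Prod.mk.injEq, Equiv.symm_apply_eq, Fin.ext_iff]
  omega

variable (H) in
theorem card_filter_pos_zero_lt :
    #({p | (H.pos 0 p.1 : ℕ) < H.pos 0 p.2} : Finset (Fin n × Fin n)) = n.choose 2 := by
  calc _ = #({p | p.1 < p.2} : Finset (Fin n × Fin n)) :=
        card_equiv ((H.pos 0).prodCongr (H.pos 0)) (by simp)
    _ = n.choose 2 := by rw [Fintype.card_product_filter_lt, Fintype.card_fin]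

variable (H) in
/-- Every transposition of a halfperiod inverts a pair that is still in its initial order: the
`C(n, 2)` initially ordered pairs must all be inverted, and there are only `C(n, 2)` steps. -/
theorem image_swapped :
    univ.image H.swapped = ({p | (H.pos 0 p.1 : ℕ) < H.pos 0 p.2} : Finset (Fin n × Fin n)) := by
  refine (eq_of_subset_of_card_le (fun p hp => ?_) ?_).symm
  · obtain ⟨u, hu, hswap⟩ := exists_swapsAt_of_lt (mem_filter.1 hp).2
    exact mem_image.2 ⟨⟨u, hu⟩, mem_univ _, swapped_eq_iff.2 hswap⟩
  · rw [card_filter_pos_zero_lt]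
    simpa using card_image_le (s := univ) (f := H.swapped)

variable (H) in
theorem swapped_injective : Function.Injective H.swapped := by
  rw [← Set.injOn_univ, ← coe_univ, ← card_image_iff, image_swapped, card_filter_pos_zero_lt,
    card_univ, Fintype.card_fin]

theorem lt_of_swapsAt {u : ℕ} (hu : u < n.choose 2) {x y : Fin n} (h : H.SwapsAt u x y) :
    (H.pos 0 x : ℕ) < H.pos 0 y := by
  have hmem := image_swapped H ▸ mem_image_of_mem H.swapped (mem_univ (⟨u, hu⟩ : Fin _))
  rw [swapped_eq_iff.2 h] at hmem
  exact (mem_filter.1 hmem).2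

theorem eq_of_swapsAt {u v : ℕ} (hu : u < n.choose 2) (hv : v < n.choose 2) {x y : Fin n}
    (h : H.SwapsAt u x y) (h' : H.SwapsAt v x y) : u = v :=
  Fin.mk.inj_iff.1 <| swapped_injective H (a₁ := ⟨u, hu⟩) (a₂ := ⟨v, hv⟩) <|
    (swapped_eq_iff.2 h).trans (swapped_eq_iff.2 h').symm

end Halfperiod

section DigraphDk

variable {n : ℕ} {H : Halfperiod n} {k : ℕ}

theorem DkArc.exists_swapsAt {i j : ℕ} (h : DkArc H k i j) :
    ∃ t < n.choose 2, k < H.move t + 1 ∧ H.move t + 1 < n - k ∧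
      ∃ x y : Fin n, (H.pos 0 x : ℕ) = i - 1 ∧ (H.pos 0 y : ℕ) = j - 1 ∧ H.SwapsAt t x y := by
  obtain ⟨hij, t, ht, hk, hk', x, y, hx, hy, hswap | hswap⟩ := h
  · exact ⟨t, ht, hk, hk', x, y, hx, hy, hswap⟩
  · have := Halfperiod.lt_of_swapsAt ht hswap
    have : (H.pos t y : ℕ) ≠ H.pos t x := by omega
    omega

theorem dkOutdeg_le_div_three_sub (i : ℕ) : DkOutdeg H k i ≤ n / 3 - i := by
  calc DkOutdeg H k i ≤ (Set.Ioc i (n / 3)).ncard :=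
        Set.ncard_le_ncard (fun j hj => ⟨hj.2.2.1, hj.2.1⟩) (Set.finite_Ioc i (n / 3))
    _ = n / 3 - i := by rw [← coe_Ioc, Set.ncard_coe_finset, Nat.card_Ioc]

theorem dkOutdeg_le_card_upSteps {i : ℕ} {a : Fin n} (ha : (H.pos 0 a : ℕ) = i - 1) :
    DkOutdeg H k i ≤ #(upSteps (fun u => H.pos u a) (n.choose 2) k (n - k - 1)) := by
  have hup : ∀ j ∈ {j | 1 ≤ j ∧ j ≤ n / 3 ∧ DkArc H k i j},
      ∃ t ∈ upSteps (fun u => H.pos u a) (n.choose 2) k (n - k - 1),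
        ∃ y : Fin n, (H.pos 0 y : ℕ) = j - 1 ∧ (H.pos t y : ℕ) = H.move t + 1 := by
    rintro j ⟨-, -, harc⟩
    obtain ⟨t, ht, hk, hk', x, y, hx, hy, hxt, hyt⟩ := harc.exists_swapsAt
    obtain rfl : x = a := (H.pos 0).injective (Fin.ext (hx.trans ha.symm))
    have := (Halfperiod.pos_succ_eq_add_one_iff ht x).2 hxt
    refine ⟨t, ?_, y, hy, hyt⟩
    simp only [upSteps, mem_filter, mem_range]
    omega
  choose! step hstep hpartner using hup
  rw [← Set.ncard_coe_finset]
  refine Set.ncard_le_ncard_of_injOn step hstep (fun j hj j' hj' hjj' => ?_) (finite_toSet _)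
  obtain ⟨y, hy, hyt⟩ := hpartner j hj
  obtain ⟨y', hy', hyt'⟩ := hpartner j' hj'
  obtain rfl : y = y' := (H.pos (step j)).injective (Fin.ext (hyt.trans (hjj' ▸ hyt'.symm)))
  have := hj.1
  have := hj'.1
  omega

theorem card_downSteps_le_dkIndeg {i : ℕ} (hi : i ≤ n / 3) {a : Fin n}
    (ha : (H.pos 0 a : ℕ) = i - 1) :
    #(downSteps (fun u => H.pos u a) (n.choose 2) k (n - k - 1)) ≤ DkIndeg H k i := by
  have hdown : ∀ u ∈ downSteps (fun u => H.pos u a) (n.choose 2) k (n - k - 1),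
      ∃ j ∈ {j | 1 ≤ j ∧ j ≤ n / 3 ∧ DkArc H k j i},
        ∃ x : Fin n, (H.pos 0 x : ℕ) = j - 1 ∧ H.SwapsAt u x a := by
    intro u hu
    simp only [downSteps, mem_filter, mem_range] at hu
    obtain ⟨hu, hk, hk', hmove⟩ := hu
    have hat := (Halfperiod.pos_eq_pos_succ_add_one_iff hu a).1 hmove
    set x := (H.pos u).symm ⟨H.move u, (H.move u).lt_add_one.trans (H.move_lt u hu)⟩
    have hswap : H.SwapsAt u x a := ⟨by simp [x], hat⟩
    have hxa := Halfperiod.lt_of_swapsAt hu hswap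
    have harc : DkArc H k (H.pos 0 x + 1) i :=
      ⟨by omega, u, hu, by omega, by omega, x, a, rfl, ha, Or.inl hswap⟩
    exact ⟨H.pos 0 x + 1, ⟨by omega, by omega, harc⟩, x, rfl, hswap⟩
  choose! partner hpartner hswap using hdown
  rw [← Set.ncard_coe_finset]
  refine Set.ncard_le_ncard_of_injOn partner hpartner (fun u hu u' hu' huu' => ?_)
    ((Set.finite_Iic (n / 3)).subset fun j hj => hj.2.1)
  obtain ⟨x, hx, hxu⟩ := hswap u hu
  obtain ⟨x', hx', hxu'⟩ := hswap u' hu'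
  obtain rfl : x = x' := (H.pos 0).injective (Fin.ext (hx.trans (huu' ▸ hx'.symm)))
  exact Halfperiod.eq_of_swapsAt (mem_range.1 (mem_filter.1 hu).1)
    (mem_range.1 (mem_filter.1 hu').1) hxu hxu'

end DigraphDk

theorem DkOutdeg_le_general (n k : ℕ) (hk1 : n / 3 < k) (H : Halfperiod n) :
    ∀ i : ℕ, 1 ≤ i → i ≤ n / 3 →
      DkOutdeg H k i ≤ min (n - 2 * k - 1 + DkIndeg H k i) (n / 3 - i) := by
  intro i hi1 hi
  refine le_min ?_ (dkOutdeg_le_div_three_sub i)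
  obtain ⟨a, ha⟩ : ∃ a : Fin n, (H.pos 0 a : ℕ) = i - 1 :=
    ⟨(H.pos 0).symm ⟨i - 1, by omega⟩, by simp⟩
  have hcross := card_upSteps_eq (f := fun u => H.pos u a)
    (fun u hu => Halfperiod.pos_succ_le_and_le hu a) (show (H.pos 0 a : ℕ) ≤ k by omega)
    (show n - k - 1 ≤ H.pos (n.choose 2) a by rw [H.reverse, ha]; omega)
  calc DkOutdeg H k i ≤ #(upSteps (fun u => H.pos u a) (n.choose 2) k (n - k - 1)) :=
        dkOutdeg_le_card_upSteps ha
    _ = #(downSteps (fun u => H.pos u a) (n.choose 2) k (n - k - 1)) + (n - k - 1 - k) := hcross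
    _ ≤ DkIndeg H k i + (n - k - 1 - k) := by grw [card_downSteps_le_dkIndeg hi ha]
    _ = n - 2 * k - 1 + DkIndeg H k i := by omega

/-- For a 3-decomposable halfperiod on `n` points (with `3 ∣ n`) and `n/3 < k < n/2`, every
vertex `i` of the digraph `D_k` satisfies `outdeg(i) ≤ min(n − 2k − 1 + indeg(i), n/3 − i)`. -/
theorem DkOutdeg_le (n k : ℕ) (hn : 0 < n) (h3 : 3 ∣ n)
    (hk1 : n / 3 < k) (hk2 : 2 * k < n)
    (H : Halfperiod n) (A B C : Finset (Fin n)) (hdec : H.ThreeDecomp A B C) :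
    ∀ i : ℕ, 1 ≤ i → i ≤ n / 3 →
      DkOutdeg H k i ≤ min (n - 2 * k - 1 + DkIndeg H k i) (n / 3 - i) :=
  DkOutdeg_le_general n k hk1 H
end

section
/- Let n be a positive integer divisible by 3 and let k be an integer with n/3 < k < n/2; set v := n/3 and m := n−2k−1. Then the number of arcs of the digraph D₀(v,m) equals E(k,n) := 2m²·binom(S_m(v),3) + binom(m,2)·binom(S_m(v),2) + 2m·T_m(v)·binom(S_m(v),2) + binom(T_m(v),2)·S_m(v) + (U_m(v)+1)·( m·(S_m(v)−1) + T_m(v) ). -/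
/-- The outdegree of vertex `i` in the digraph `D₀(v,m)` on vertices `1, …, v`:
`outdeg(i) = min(indeg(i) + m, v − i)`, where `indeg(i)` is the number of vertices
`i' < i` with an arc to `i`, i.e. with `i ≤ i' + outdeg(i')`. -/
def D0outdeg (v m : ℕ) (i : ℕ) : ℕ :=
  min ((Finset.filter
        (fun i' : Fin i => 1 ≤ (i' : ℕ) ∧ i ≤ (i' : ℕ) + D0outdeg v m (i' : ℕ))
        Finset.univ).card + m) (v - i)
  termination_by i
  decreasing_by
    simp_wf
    exact Fin.is_lt _

/-- The number of arcs of the digraph `D₀(v,m)`: there is an arc from `i` to `j`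
(for `1 ≤ i < j ≤ v`) if and only if `j ≤ i + outdeg(i)`. -/
def D0arcs (v m : ℕ) : ℕ :=
  ((Finset.Icc 1 v ×ˢ Finset.Icc 1 v).filter
    (fun p => p.1 < p.2 ∧ p.2 ≤ p.1 + D0outdeg v m p.1)).card

/-!
In the infinite digraph `D₀(∞, m)` the in-neighbours of a vertex `j` are the `outdeg(j) − m`
vertices just before it, so the outdegree is nondecreasing and is encoded by its thresholds: the
first vertex of outdegree at least `w`. Writing `w = m·s + t` with `t < m`, exactly `s` vertices
have outdegree `w`, so this threshold is `1 + m·C(s,2) + s·t`, and the recursion holds because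
the threshold of `m + d` is `d` more than the threshold of `d`. For `j ≤ v` the cap `v − i` never
removes an arc into `j`, so `D₀(v,m)` has the indegrees of `D₀(∞, m)`. Counting arcs by their heads
and double counting the pairs `(w, j)` with `threshold m w ≤ j ≤ v` turns the arc count into a sum of
`v + 1 − threshold m w` over `w ≤ m·S + T`, which the threshold formula evaluates.
-/

open Finset

namespace D0

-- The first vertex of `D₀(∞, m)` whose outdegree is at least `w`.
def threshold (m w : ℕ) : ℕ := 1 + m * (w / m).choose 2 + w / m * (w % m)

variable {m : ℕ}

lemma one_le_threshold (w : ℕ) : 1 ≤ threshold m w := by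
  unfold threshold; omega

@[simp]
lemma threshold_zero : threshold m 0 = 1 := by simp [threshold]

lemma threshold_mul_add (hm : 0 < m) (s : ℕ) {t : ℕ} (ht : t ≤ m) :
    threshold m (m * s + t) = 1 + m * s.choose 2 + s * t := by
  obtain rfl | ht := ht.eq_or_lt
  · rw [← mul_add_one, threshold, Nat.mul_div_cancel_left _ hm, Nat.mul_mod_right,
      Nat.choose_succ_succ', Nat.choose_one_right]
    ring
  · simp [threshold, Nat.mul_add_div hm, Nat.div_eq_of_lt ht, Nat.mod_eq_of_lt ht]

lemma threshold_succ (hm : 0 < m) (w : ℕ) : threshold m (w + 1) = threshold m w + w / m := by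
  have hr := Nat.mod_lt w hm
  have hw : threshold m w = 1 + m * (w / m).choose 2 + w / m * (w % m) := by
    rw [← threshold_mul_add hm _ hr.le, Nat.div_add_mod]
  have hw' : threshold m (w + 1) = 1 + m * (w / m).choose 2 + w / m * (w % m + 1) := by
    rw [← threshold_mul_add hm _ (t := w % m + 1) hr, ← add_assoc, Nat.div_add_mod]
  rw [hw, hw']
  ring

lemma threshold_mono (hm : 0 < m) : Monotone (threshold m) :=
  monotone_nat_of_le_succ fun w => by rw [threshold_succ hm]; exact Nat.le_add_right _ _

lemma lt_threshold_add (hm : 0 < m) (w : ℕ) : w < threshold m w + m := by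
  induction w with
  | zero => simp [hm]
  | succ w ih =>
    rw [threshold_succ hm]
    rcases Nat.eq_zero_or_pos (w / m) with h | h
    · have := (Nat.div_eq_zero_iff_lt hm).mp h
      have := one_le_threshold (m := m) w
      omega
    · omega

lemma threshold_add_left (hm : 0 < m) (d : ℕ) : threshold m (m + d) = threshold m d + d := by
  induction d with
  | zero => simpa using threshold_mul_add hm 1 (Nat.zero_le m)
  | succ d ih =>
    rw [← add_assoc, threshold_succ hm, threshold_succ hm, ih, Nat.add_div_left _ hm]
    ring

-- The outdegree of vertex `i` in `D₀(∞, m)`.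
def outdegInf (m i : ℕ) : ℕ := Nat.findGreatest (fun w => threshold m w ≤ i) (m + i)

variable {i : ℕ}

lemma le_outdegInf_iff (hm : 0 < m) (hi : 1 ≤ i) {w : ℕ} :
    w ≤ outdegInf m i ↔ threshold m w ≤ i := by
  constructor
  · intro hw
    exact (threshold_mono hm hw).trans
      (Nat.findGreatest_spec (P := fun w => threshold m w ≤ i) (Nat.zero_le _) (by simpa))
  · intro hw
    exact Nat.le_findGreatest (by have := lt_threshold_add hm w; omega) hw

lemma outdegInf_lt (hm : 0 < m) (hi : 1 ≤ i) : outdegInf m i < m + i := by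
  have := (le_outdegInf_iff hm hi).mp le_rfl
  have := lt_threshold_add hm (outdegInf m i)
  omega

lemma le_outdegInf (hm : 0 < m) (hi : 1 ≤ i) : m ≤ outdegInf m i := by
  have h := threshold_add_left hm 0
  rw [add_zero, threshold_zero] at h
  rwa [le_outdegInf_iff hm hi, h]

lemma le_outdegInf_sub_iff (hm : 0 < m) {d j : ℕ} (hdj : d < j) :
    d ≤ outdegInf m (j - d) ↔ m + d ≤ outdegInf m j := by
  rw [le_outdegInf_iff hm (by omega), le_outdegInf_iff hm (by omega), threshold_add_left hm]
  omega

lemma card_filter_le_add_outdegInf (hm : 0 < m) {j : ℕ} (hj : 1 ≤ j) :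
    #{i ∈ Ico 1 j | j ≤ i + outdegInf m i} = outdegInf m j - m := by
  have hlt := outdegInf_lt hm hj
  have hset : {i ∈ Ico 1 j | j ≤ i + outdegInf m i} = Ico (j + m - outdegInf m j) j := by
    ext i
    simp only [mem_filter, mem_Ico]
    have key := le_outdegInf_sub_iff hm (d := j - i) (j := j)
    constructor
    · rintro ⟨⟨hi1, hij⟩, hin⟩
      have := key (by omega) |>.mp (by rw [Nat.sub_sub_self hij.le]; omega)
      omega
    · rintro ⟨hi, hij⟩
      have := key (by omega) |>.mpr (by omega)
      rw [Nat.sub_sub_self hij.le] at this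
      omega
  rw [hset, Nat.card_Ico]
  omega

lemma sum_outdegInf_add_one (hm : 0 < m) {v N : ℕ} (hN : v < threshold m N) :
    ∑ j ∈ Icc 1 v, (outdegInf m j + 1) = ∑ w ∈ range N, (v + 1 - threshold m w) := by
  have hrow : ∀ j ∈ Icc 1 v, outdegInf m j + 1 = #{w ∈ range N | threshold m w ≤ j} := by
    intro j hj
    rw [mem_Icc] at hj
    have hlt : outdegInf m j < N := by
      by_contra! h
      have := (le_outdegInf_iff hm hj.1).mp h
      omega
    rw [← card_range (outdegInf m j + 1)]
    congr 1
    ext w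
    simp only [mem_range, mem_filter, Nat.lt_succ_iff, ← le_outdegInf_iff hm hj.1]
    omega
  have hcol : ∀ w ∈ range N, v + 1 - threshold m w = #{j ∈ Icc 1 v | threshold m w ≤ j} := by
    intro w _
    rw [← Nat.card_Icc]
    congr 1
    ext j
    simp only [mem_Icc, mem_filter]
    have := one_le_threshold (m := m) w
    omega
  rw [sum_congr rfl hrow, sum_congr rfl hcol]
  exact sum_card_bipartiteAbove_eq_sum_card_bipartiteBelow _

lemma sum_range_threshold (hm : 0 < m) (S : ℕ) {T : ℕ} (hT : T ≤ m) :
    ∑ w ∈ range (m * S + T), threshold m w =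
      m * S + T + m ^ 2 * S.choose 3 + m.choose 2 * S.choose 2 + m * T * S.choose 2 +
        S * T.choose 2 := by
  induction S generalizing T with
  | zero =>
    have hone : ∀ w ∈ range (m * 0 + T), threshold m w = 1 := fun w hw => by
      simpa using threshold_mul_add hm 0 (by rw [mul_zero, zero_add, mem_range] at hw; omega : w ≤ m)
    rw [sum_congr rfl hone]
    simp
  | succ S ih =>
    induction T with
    | zero =>
      rw [mul_add_one, add_zero, ih le_rfl, Nat.choose_succ_succ' S 2, Nat.choose_succ_succ' S 1,
        Nat.choose_one_right, Nat.choose_zero_succ]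
      ring
    | succ T ihT =>
      rw [← add_assoc, sum_range_succ, ihT (by omega), threshold_mul_add hm _ (by omega),
        Nat.choose_succ_succ' T 1, Nat.choose_one_right]
      ring

end D0

open D0

def D0indeg (v m j : ℕ) : ℕ := #{i ∈ Ico 1 j | j ≤ i + D0outdeg v m i}

lemma D0outdeg_eq_min (v m i : ℕ) : D0outdeg v m i = min (D0indeg v m i + m) (v - i) := by
  rw [D0outdeg, D0indeg, card_filter, Fin.sum_univ_eq_sum_range
    (fun x => if 1 ≤ x ∧ i ≤ x + D0outdeg v m x then 1 else 0), ← card_filter]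
  congr 3
  ext x
  simp only [mem_filter, mem_range, mem_Ico]
  omega

lemma D0arcs_eq_sum_D0indeg (v m : ℕ) : D0arcs v m = ∑ j ∈ Icc 1 v, D0indeg v m j := by
  rw [D0arcs, card_eq_sum_card_fiberwise (f := Prod.snd) (t := Icc 1 v)
    (fun p hp => (mem_product.mp (mem_filter.mp hp).1).2)]
  refine sum_congr rfl fun j hj => ?_
  rw [mem_Icc] at hj
  refine card_nbij' Prod.fst (fun i => (i, j)) ?_ ?_ ?_ ?_
  · intro p hp
    simp only [mem_coe, mem_filter, mem_product, mem_Icc, mem_Ico] at hp ⊢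
    obtain ⟨⟨⟨⟨hp1, -⟩, -⟩, hlt, hle⟩, rfl⟩ := hp
    exact ⟨⟨hp1, hlt⟩, hle⟩
  · intro i hi
    simp only [mem_coe, mem_filter, mem_product, mem_Icc, mem_Ico, and_true] at hi ⊢
    omega
  · intro p hp
    simp only [mem_coe, mem_filter] at hp
    exact Prod.ext rfl hp.2.symm
  · intro i _
    rfl

lemma D0indeg_add_eq_outdegInf {v m : ℕ} (hm : 0 < m) {j : ℕ} (hj : 1 ≤ j) (hjv : j ≤ v) :
    D0indeg v m j + m = outdegInf m j := by
  induction j using Nat.strong_induction_on with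
  | _ j ih =>
    have hfilter : {i ∈ Ico 1 j | j ≤ i + D0outdeg v m i} =
        {i ∈ Ico 1 j | j ≤ i + outdegInf m i} := by
      refine filter_congr fun i hi => ?_
      rw [mem_Ico] at hi
      rw [D0outdeg_eq_min, ih i hi.2 hi.1 (by omega)]
      omega
    rw [D0indeg, hfilter, card_filter_le_add_outdegInf hm hj]
    have := le_outdegInf hm hj
    omega

lemma Nat.mul_choose_two_eq (n : ℕ) : n * n.choose 2 = 3 * n.choose 3 + 2 * n.choose 2 := by
  have := Nat.add_one_mul_choose_eq n 2
  rw [Nat.choose_succ_succ'] at this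
  linarith

theorem D0arcs_eq_of_decomp {v m S T U : ℕ} (hT : T < m) (hU : U < S)
    (hv : v = 1 + m * S.choose 2 + S * T + U) :
    D0arcs v m = 2 * m ^ 2 * S.choose 3 + m.choose 2 * S.choose 2 + 2 * m * T * S.choose 2 +
      T.choose 2 * S + (U + 1) * (m * (S - 1) + T) := by
  have hm : 0 < m := by omega
  have hN : v < threshold m (m * S + (T + 1)) := by
    rw [threshold_mul_add hm S (t := T + 1) hT, mul_add_one]
    omega
  have hlast : threshold m (m * S + T) ≤ v := by
    rw [threshold_mul_add hm S hT.le]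
    omega
  have hrows : D0arcs v m + (m + 1) * v = ∑ j ∈ Icc 1 v, (outdegInf m j + 1) := by
    have hj : ∀ j ∈ Icc 1 v, outdegInf m j + 1 = D0indeg v m j + (m + 1) := fun j hj => by
      rw [mem_Icc] at hj
      rw [← D0indeg_add_eq_outdegInf hm hj.1 hj.2, add_assoc]
    rw [D0arcs_eq_sum_D0indeg, sum_congr rfl hj, sum_add_distrib, sum_const, Nat.card_Icc,
      add_tsub_cancel_right, smul_eq_mul, mul_comm]
  have hcols : ∑ j ∈ Icc 1 v, (outdegInf m j + 1) + ∑ w ∈ range (m * S + (T + 1)), threshold m w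
      = (m * S + (T + 1)) * (v + 1) := by
    rw [sum_outdegInf_add_one hm hN, ← sum_add_distrib,
      sum_congr rfl fun w hw => Nat.sub_add_cancel ?_, sum_const, card_range, smul_eq_mul]
    have hw' : w ≤ m * S + T := by rw [mem_range] at hw; omega
    have := threshold_mono hm hw'
    omega
  rw [sum_range_threshold hm S (T := T + 1) hT] at hcols
  have h3 := Nat.mul_choose_two_eq S
  have hS : 1 ≤ S := by omega
  subst hv
  qify [hS] at hrows hcols h3 ⊢
  push_cast [Nat.cast_choose_two] at hrows hcols h3 ⊢
  linear_combination hrows + hcols + (m : ℚ) ^ 2 * h3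

theorem D0arcs_eq_general (n k S T U : ℕ)
    (hT : T < n - 2 * k - 1) (hU : U < S)
    (hdecomp : n / 3 = 1 + (n - 2 * k - 1) * S.choose 2 + S * T + U) :
    D0arcs (n / 3) (n - 2 * k - 1) =
      2 * (n - 2 * k - 1) ^ 2 * S.choose 3 + (n - 2 * k - 1).choose 2 * S.choose 2 +
        2 * (n - 2 * k - 1) * T * S.choose 2 + T.choose 2 * S +
        (U + 1) * ((n - 2 * k - 1) * (S - 1) + T) :=
  D0arcs_eq_of_decomp hT hU hdecomp

/-- For `3 ∣ n` and `n/3 < k < n/2`, setting `v := n/3` and `m := n − 2k − 1`, the number of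
arcs of `D₀(v,m)` equals
`E(k,n) = 2m²·C(S,3) + C(m,2)·C(S,2) + 2m·T·C(S,2) + C(T,2)·S + (U+1)·(m(S−1)+T)`,
where `S = S_m(v)`, `T = T_m(v)`, `U = U_m(v)` are the unique integers with
`C(S,2) < v/m ≤ C(S+1,2)`, `0 ≤ T ≤ m−1`, `0 ≤ U ≤ S−1` and
`v = 1 + m·C(S,2) + S·T + U`. -/
theorem D0arcs_eq (n k S T U : ℕ) (hn : 0 < n) (h3 : 3 ∣ n)
    (hk1 : n / 3 < k) (hk2 : 2 * k < n)
    (hS1 : (n - 2 * k - 1) * S.choose 2 < n / 3)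
    (hS2 : n / 3 ≤ (n - 2 * k - 1) * (S + 1).choose 2)
    (hT : T < n - 2 * k - 1) (hU : U < S)
    (hdecomp : n / 3 = 1 + (n - 2 * k - 1) * S.choose 2 + S * T + U) :
    D0arcs (n / 3) (n - 2 * k - 1) =
      2 * (n - 2 * k - 1) ^ 2 * S.choose 3 + (n - 2 * k - 1).choose 2 * S.choose 2 +
        2 * (n - 2 * k - 1) * T * S.choose 2 + T.choose 2 * S +
        (U + 1) * ((n - 2 * k - 1) * (S - 1) + T) :=
  D0arcs_eq_general n k S T U hT hU hdecomp
end

section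
/- There exists a 3-symmetric set P of 24 points in general position in the plane with cr(P) = 3699. In particular, the rectilinear crossing number satisfies cr(K_24) ≤ 3699. -/
/-- A finite planar point set is in general position if no three of its points are collinear. -/
def GenPos (P : Finset (ℝ × ℝ)) : Prop :=
  ∀ p ∈ P, ∀ q ∈ P, ∀ r ∈ P, p ≠ q → p ≠ r → q ≠ r →
    ¬ Collinear ℝ ({p, q, r} : Set (ℝ × ℝ))

/-- A set of points is in convex position if no point lies in the convex hull of the others. -/
def ConvexPos (S : Set (ℝ × ℝ)) : Prop :=
  ∀ p ∈ S, p ∉ convexHull ℝ (S \ {p})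

/-- `crNum P` is the number of 4-element subsets of `P` in convex position. -/
noncomputable def crNum (P : Finset (ℝ × ℝ)) : ℕ :=
  Set.ncard {Q : Finset (ℝ × ℝ) | Q ⊆ P ∧ Q.card = 4 ∧ ConvexPos (↑Q : Set (ℝ × ℝ))}

/-- The rectilinear crossing number of `K_n`: the minimum of `crNum P` over all sets `P` of `n`
points in general position in the plane. -/
noncomputable def rcn (n : ℕ) : ℕ :=
  sInf {c : ℕ | ∃ P : Finset (ℝ × ℝ), P.card = n ∧ GenPos P ∧ crNum P = c}

/-- Rotation by angle `2π/3` about the point `o`. -/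
noncomputable def rot120 (o p : ℝ × ℝ) : ℝ × ℝ :=
  (o.1 + Real.cos (2 * Real.pi / 3) * (p.1 - o.1) - Real.sin (2 * Real.pi / 3) * (p.2 - o.2),
   o.2 + Real.sin (2 * Real.pi / 3) * (p.1 - o.1) + Real.cos (2 * Real.pi / 3) * (p.2 - o.2))

/-- A planar point set is 3-symmetric if some rotation by `2π/3` about a point not in the set
maps the set onto itself. -/
def ThreeSym (P : Finset (ℝ × ℝ)) : Prop :=
  ∃ o : ℝ × ℝ, o ∉ P ∧ rot120 o '' (P : Set (ℝ × ℝ)) = (P : Set (ℝ × ℝ))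

/-!
The 24 points are taken of the form `(a, b√3)` with `a, b` integers. Every orientation
determinant of three such points is `√3` times an integer determinant, and a point lies in a
triangle iff its orientations with respect to the three edges agree in sign with the triangle's.
So general position and convex position of each of the `C(24, 4)` quadruples become integer
sign conditions, which the kernel evaluates. In these coordinates the rotation by `2π/3` about
the origin is `(a, b) ↦ ((-a - 3b)/2, (a - b)/2)`, under which the integer set is closed.
-/

open Real

def orient (p q r : ℝ × ℝ) : ℝ := (q.1 - p.1) * (r.2 - p.2) - (q.2 - p.2) * (r.1 - p.1)

lemma Collinear.orient_eq_zero {p q r : ℝ × ℝ} (h : Collinear ℝ ({p, q, r} : Set (ℝ × ℝ))) :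
    orient p q r = 0 := by
  obtain ⟨v, hv⟩ := (collinear_iff_of_mem (Set.mem_insert p _)).1 h
  obtain ⟨s, rfl⟩ := hv q (by simp)
  obtain ⟨t, rfl⟩ := hv r (by simp)
  simp only [orient, vadd_eq_add, Prod.fst_add, Prod.snd_add, Prod.smul_fst, Prod.smul_snd,
    smul_eq_mul]
  ring

lemma orient_eq_of_barycentric {A B C : ℝ × ℝ} {α β γ : ℝ} (hs : α + β + γ = 1) :
    orient B C (α • A + β • B + γ • C) = α * orient A B C ∧
      orient C A (α • A + β • B + γ • C) = β * orient A B C ∧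
      orient A B (α • A + β • B + γ • C) = γ * orient A B C := by
  obtain rfl : α = 1 - β - γ := by linarith
  refine ⟨?_, ?_, ?_⟩ <;>
  · simp only [orient, Prod.fst_add, Prod.snd_add, Prod.smul_fst, Prod.smul_snd, smul_eq_mul]
    ring

lemma eq_barycentric_of_orient_ne_zero {A B C : ℝ × ℝ} (Q : ℝ × ℝ) (hD : orient A B C ≠ 0) :
    (orient B C Q / orient A B C) • A + (orient C A Q / orient A B C) • B +
      (orient A B Q / orient A B C) • C = Q := by
  simp only [orient] at hD ⊢
  ext <;>
  · simp only [Prod.fst_add, Prod.snd_add, Prod.smul_fst, Prod.smul_snd, smul_eq_mul]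
    field_simp
    ring

lemma orient_add_orient_add_orient (A B C Q : ℝ × ℝ) :
    orient B C Q + orient C A Q + orient A B Q = orient A B C := by
  simp only [orient]; ring

lemma mem_convexHull_triple_iff {A B C Q : ℝ × ℝ} :
    Q ∈ convexHull ℝ {A, B, C} ↔
      ∃ α β γ : ℝ, 0 ≤ α ∧ 0 ≤ β ∧ 0 ≤ γ ∧ α + β + γ = 1 ∧ α • A + β • B + γ • C = Q := by
  constructor
  · rw [convexHull_insert (Set.insert_nonempty B {C}), mem_convexJoin, convexHull_pair]
    rintro ⟨_, rfl, _, ⟨s, t, hs, ht, hst, rfl⟩, u, v, hu, hv, huv, rfl⟩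
    refine ⟨u, v * s, v * t, hu, mul_nonneg hv hs, mul_nonneg hv ht, ?_, ?_⟩
    · linear_combination huv + v * hst
    · rw [mul_smul, mul_smul, add_assoc, ← smul_add]
  · rintro ⟨α, β, γ, hα, hβ, hγ, hs, rfl⟩
    have hmem : ∀ P ∈ ({A, B, C} : Set (ℝ × ℝ)), P ∈ convexHull ℝ {A, B, C} :=
      fun P hP => subset_convexHull ℝ _ hP
    simpa [Fin.sum_univ_three] using
      (convex_convexHull ℝ ({A, B, C} : Set (ℝ × ℝ))).sum_mem (t := Finset.univ)
        (w := ![α, β, γ]) (z := ![A, B, C]) (by simp [Fin.forall_fin_succ, *])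
        (by simp [Fin.sum_univ_three, hs]) (by simp [Fin.forall_fin_succ, hmem])

lemma mem_convexHull_triple_iff_orient {A B C Q : ℝ × ℝ} (hD : orient A B C ≠ 0) :
    Q ∈ convexHull ℝ {A, B, C} ↔
      0 ≤ orient B C Q * orient A B C ∧ 0 ≤ orient C A Q * orient A B C ∧
        0 ≤ orient A B Q * orient A B C := by
  rw [mem_convexHull_triple_iff]
  constructor
  · rintro ⟨α, β, γ, hα, hβ, hγ, hs, rfl⟩
    obtain ⟨h₁, h₂, h₃⟩ := orient_eq_of_barycentric (A := A) (B := B) (C := C) hs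
    rw [h₁, h₂, h₃]
    have := mul_self_nonneg (orient A B C)
    refine ⟨?_, ?_, ?_⟩ <;> rw [mul_assoc] <;> positivity
  · rintro ⟨h₁, h₂, h₃⟩
    have hD2 : 0 < orient A B C * orient A B C := mul_self_pos.2 hD
    have key : ∀ x, 0 ≤ x * orient A B C → 0 ≤ x / orient A B C := fun x hx => by
      rw [← mul_div_mul_right x _ hD]; positivity
    refine ⟨_, _, _, key _ h₁, key _ h₂, key _ h₃, ?_, eq_barycentric_of_orient_ne_zero Q hD⟩
    rw [← add_div, ← add_div, orient_add_orient_add_orient, div_self hD]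

lemma convexPos_four_iff {A B C D : ℝ × ℝ} (hAB : A ≠ B) (hAC : A ≠ C) (hAD : A ≠ D)
    (hBC : B ≠ C) (hBD : B ≠ D) (hCD : C ≠ D) :
    ConvexPos {A, B, C, D} ↔
      A ∉ convexHull ℝ {B, C, D} ∧ B ∉ convexHull ℝ {A, C, D} ∧
        C ∉ convexHull ℝ {A, B, D} ∧ D ∉ convexHull ℝ {A, B, C} := by
  have e₁ : ({A, B, C, D} : Set (ℝ × ℝ)) \ {A} = {B, C, D} := by ext; grind
  have e₂ : ({A, B, C, D} : Set (ℝ × ℝ)) \ {B} = {A, C, D} := by ext; grind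
  have e₃ : ({A, B, C, D} : Set (ℝ × ℝ)) \ {C} = {A, B, D} := by ext; grind
  have e₄ : ({A, B, C, D} : Set (ℝ × ℝ)) \ {D} = {A, B, C} := by ext; grind
  simp only [ConvexPos, Set.forall_mem_insert, Set.mem_singleton_iff, forall_eq, e₁, e₂, e₃, e₄]

lemma ncard_subsets_toFinset_eq_countP {α : Type*} [DecidableEq α] {l : List α} (hl : l.Nodup)
    (n : ℕ) (p : Finset α → Prop) (g : List α → Bool)
    (hg : ∀ s ∈ l.sublistsLen n, p s.toFinset ↔ g s = true) :
    {q : Finset α | q ⊆ l.toFinset ∧ q.card = n ∧ p q}.ncard = (l.sublistsLen n).countP g := by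
  classical
  have hset : {q : Finset α | q ⊆ l.toFinset ∧ q.card = n ∧ p q} =
      ↑((l.toFinset.powersetCard n).filter p) := by
    ext q
    simp [Finset.mem_powersetCard, and_assoc]
  have hval : l.toFinset.val = ↑l := by rw [List.toFinset_val, List.dedup_eq_self.2 hl]
  rw [hset, Set.ncard_coe_finset, Finset.card_def, Finset.filter_val,
    ← Multiset.countP_eq_card_filter]
  calc Multiset.countP p (l.toFinset.powersetCard n).val
      = Multiset.countP (fun m => p m.toFinset)
          ((l.toFinset.powersetCard n).val.map Finset.val) := by
        rw [Multiset.countP_map, Multiset.countP_eq_card_filter]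
        simp only [Finset.val_toFinset]
    _ = (l.sublistsLen n).countP g := by
        rw [Finset.map_val_val_powersetCard, hval, Multiset.powersetCard_coe, Multiset.coe_countP,
          List.countP_map]
        exact List.countP_congr fun s hs => by
          simp only [Function.comp_apply, decide_eq_true_eq]; exact hg s hs

lemma ncard_subsets_image {α β : Type*} [DecidableEq β] {f : α → β}
    (hf : Function.Injective f) (S : Finset α) (n : ℕ) (p : Set β → Prop) :
    {Q : Finset β | Q ⊆ S.image f ∧ Q.card = n ∧ p Q}.ncard =
      {q : Finset α | q ⊆ S ∧ q.card = n ∧ p (f '' q)}.ncard := by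
  have himage : {Q : Finset β | Q ⊆ S.image f ∧ Q.card = n ∧ p Q} =
      Finset.image f '' {q : Finset α | q ⊆ S ∧ q.card = n ∧ p (f '' q)} := by
    ext Q
    constructor
    · rintro ⟨hQ, hcard, hp⟩
      obtain ⟨q, hq, rfl⟩ := Finset.subset_image_iff.1 hQ
      rw [Finset.card_image_of_injective q hf, Finset.coe_image] at *
      exact ⟨q, ⟨hq, hcard, hp⟩, rfl⟩
    · rintro ⟨q, ⟨hq, hcard, hp⟩, rfl⟩
      refine ⟨Finset.image_subset_image hq, ?_, ?_⟩
      · rwa [Finset.card_image_of_injective q hf]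
      · rwa [Finset.coe_image]
  rw [himage, Set.ncard_image_of_injective _ (Finset.image_injective hf)]

noncomputable def latticePt (p : ℤ × ℤ) : ℝ × ℝ := (p.1, p.2 * √3)

def orientZ (p q r : ℤ × ℤ) : ℤ := (q.1 - p.1) * (r.2 - p.2) - (q.2 - p.2) * (r.1 - p.1)

def GenPosZ (S : Set (ℤ × ℤ)) : Prop :=
  ∀ p ∈ S, ∀ q ∈ S, ∀ r ∈ S, p ≠ q → p ≠ r → q ≠ r → orientZ p q r ≠ 0

lemma GenPosZ.mono {S T : Set (ℤ × ℤ)} (hT : GenPosZ T) (h : S ⊆ T) : GenPosZ S :=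
  fun p hp q hq r hr => hT p (h hp) q (h hq) r (h hr)

lemma latticePt_injective : Function.Injective latticePt := by
  rintro ⟨a, b⟩ ⟨c, d⟩ h
  simp only [latticePt, Prod.mk.injEq, mul_left_inj' (Real.sqrt_ne_zero'.2 three_pos),
    Int.cast_inj] at h
  rw [h.1, h.2]

lemma orient_latticePt (p q r : ℤ × ℤ) :
    orient (latticePt p) (latticePt q) (latticePt r) = √3 * orientZ p q r := by
  simp only [orient, orientZ, latticePt]
  push_cast
  ring

lemma orient_latticePt_mul_nonneg_iff (p q r a b c : ℤ × ℤ) :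
    0 ≤ orient (latticePt p) (latticePt q) (latticePt r) *
        orient (latticePt a) (latticePt b) (latticePt c) ↔
      0 ≤ orientZ p q r * orientZ a b c := by
  have h3 : √3 * √3 = 3 := Real.mul_self_sqrt three_pos.le
  rw [orient_latticePt, orient_latticePt,
    show √3 * orientZ p q r * (√3 * orientZ a b c) = 3 * ((orientZ p q r * orientZ a b c : ℤ) : ℝ)
      by push_cast; linear_combination (orientZ p q r * orientZ a b c : ℝ) * h3,
    mul_nonneg_iff_of_pos_left three_pos, Int.cast_nonneg_iff]

def inTriangleZ (p a b c : ℤ × ℤ) : Bool :=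
  decide (0 ≤ orientZ b c p * orientZ a b c ∧ 0 ≤ orientZ c a p * orientZ a b c ∧
    0 ≤ orientZ a b p * orientZ a b c)

lemma latticePt_mem_convexHull_iff {p a b c : ℤ × ℤ} (habc : orientZ a b c ≠ 0) :
    latticePt p ∈ convexHull ℝ {latticePt a, latticePt b, latticePt c} ↔
      inTriangleZ p a b c = true := by
  have hD : orient (latticePt a) (latticePt b) (latticePt c) ≠ 0 := by
    rw [orient_latticePt]
    exact mul_ne_zero (Real.sqrt_ne_zero'.2 three_pos) (Int.cast_ne_zero.2 habc)
  simp only [mem_convexHull_triple_iff_orient hD, orient_latticePt_mul_nonneg_iff, inTriangleZ,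
    decide_eq_true_eq]

def convexQuadZ : List (ℤ × ℤ) → Bool
  | [a, b, c, d] =>
    !(inTriangleZ a b c d || inTriangleZ b a c d || inTriangleZ c a b d || inTriangleZ d a b c)
  | _ => false

lemma convexPos_latticePt_iff {a b c d : ℤ × ℤ} (hnd : [a, b, c, d].Nodup)
    (hgen : GenPosZ {x | x ∈ [a, b, c, d]}) :
    ConvexPos (latticePt '' {a, b, c, d}) ↔ convexQuadZ [a, b, c, d] = true := by
  simp only [List.nodup_cons, List.mem_cons, List.not_mem_nil, List.nodup_nil, not_or,
    or_false, not_false_eq_true, and_true] at hnd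
  obtain ⟨⟨hab, hac, had⟩, ⟨hbc, hbd⟩, hcd⟩ := hnd
  have inj : ∀ {x y}, x ≠ y → latticePt x ≠ latticePt y := latticePt_injective.ne
  simp only [Set.image_insert_eq, Set.image_singleton]
  rw [convexPos_four_iff (inj hab) (inj hac) (inj had) (inj hbc) (inj hbd) (inj hcd),
    latticePt_mem_convexHull_iff (hgen b (by simp) c (by simp) d (by simp) hbc hbd hcd),
    latticePt_mem_convexHull_iff (hgen a (by simp) c (by simp) d (by simp) hac had hcd),
    latticePt_mem_convexHull_iff (hgen a (by simp) b (by simp) d (by simp) hab had hbd),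
    latticePt_mem_convexHull_iff (hgen a (by simp) b (by simp) c (by simp) hab hac hbc)]
  simp [convexQuadZ, and_assoc]

lemma Real.cos_two_pi_div_three : Real.cos (2 * π / 3) = -(1 / 2) := by
  rw [show 2 * π / 3 = π - π / 3 by ring, Real.cos_pi_sub, Real.cos_pi_div_three]

lemma Real.sin_two_pi_div_three : Real.sin (2 * π / 3) = √3 / 2 := by
  rw [show 2 * π / 3 = π - π / 3 by ring, Real.sin_pi_sub, Real.sin_pi_div_three]

lemma rot120_injective (o : ℝ × ℝ) : Function.Injective (rot120 o) := by
  intro p q h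
  have h₁ := congrArg Prod.fst h
  have h₂ := congrArg Prod.snd h
  simp only [rot120, Real.cos_two_pi_div_three, Real.sin_two_pi_div_three] at h₁ h₂
  have h3 : √3 * √3 = 3 := Real.mul_self_sqrt three_pos.le
  ext
  · linear_combination -(1 / 2) * h₁ + √3 / 2 * h₂ + (q.1 - p.1) / 4 * h3
  · linear_combination -(√3 / 2) * h₁ - (1 / 2) * h₂ + (q.2 - p.2) / 4 * h3

lemma rot120_zero_latticePt {p q : ℤ × ℤ} (h₁ : 2 * q.1 = -p.1 - 3 * p.2)
    (h₂ : 2 * q.2 = p.1 - p.2) : rot120 0 (latticePt p) = latticePt q := by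
  have h₁' : 2 * (q.1 : ℝ) = -p.1 - 3 * p.2 := by exact_mod_cast h₁
  have h₂' : 2 * (q.2 : ℝ) = p.1 - p.2 := by exact_mod_cast h₂
  have h3 : √3 * √3 = 3 := Real.mul_self_sqrt three_pos.le
  simp only [rot120, latticePt, Real.cos_two_pi_div_three, Real.sin_two_pi_div_three,
    Prod.fst_zero, Prod.snd_zero]
  ext
  · linear_combination -(p.2 : ℝ) / 2 * h3 - (1 / 2) * h₁'
  · linear_combination -(√3 / 2) * h₂'

lemma genPos_image_latticePt {S : Finset (ℤ × ℤ)} (hS : GenPosZ S) :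
    GenPos (S.image latticePt) := by
  simp only [GenPos, Finset.mem_image]
  rintro _ ⟨p, hp, rfl⟩ _ ⟨q, hq, rfl⟩ _ ⟨r, hr, rfl⟩ hpq hpr hqr hcol
  have h := hcol.orient_eq_zero
  rw [orient_latticePt, mul_eq_zero, Int.cast_eq_zero] at h
  exact h.elim (Real.sqrt_ne_zero'.2 three_pos)
    (hS p hp q hq r hr (ne_of_apply_ne _ hpq) (ne_of_apply_ne _ hpr) (ne_of_apply_ne _ hqr))

lemma threeSym_image_latticePt {S : Finset (ℤ × ℤ)} (h₀ : 0 ∉ S)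
    (hS : ∀ p ∈ S, ∃ q ∈ S, 2 * q.1 = -p.1 - 3 * p.2 ∧ 2 * q.2 = p.1 - p.2) :
    ThreeSym (S.image latticePt) := by
  refine ⟨0, ?_, ?_⟩
  · rw [Finset.mem_image]
    rintro ⟨p, hp, hp0⟩
    have hz : latticePt 0 = 0 := by simp [latticePt]
    exact h₀ (latticePt_injective (hp0.trans hz.symm) ▸ hp)
  · have hmaps : Set.MapsTo (rot120 0) ↑(S.image latticePt) ↑(S.image latticePt) := by
      simp only [Set.MapsTo, Finset.coe_image, Set.forall_mem_image]
      intro p hp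
      obtain ⟨q, hq, h₁, h₂⟩ := hS p hp
      rw [rot120_zero_latticePt h₁ h₂]
      exact Set.mem_image_of_mem _ hq
    exact (((S.image latticePt).finite_toSet.injOn_iff_bijOn_of_mapsTo hmaps).1
      (rot120_injective 0).injOn).image_eq

lemma crNum_image_latticePt {l : List (ℤ × ℤ)} (hl : l.Nodup) (hgen : GenPosZ {x | x ∈ l}) :
    crNum (l.toFinset.image latticePt) = (l.sublistsLen 4).countP convexQuadZ := by
  rw [crNum, ncard_subsets_image latticePt_injective]
  refine ncard_subsets_toFinset_eq_countP hl 4 _ _ fun s hs => ?_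
  obtain ⟨hsub, hlen⟩ := List.mem_sublistsLen.1 hs
  obtain ⟨a, b, c, d, rfl⟩ := List.length_eq_four.1 hlen
  have hcoe : (↑[a, b, c, d].toFinset : Set (ℤ × ℤ)) = {a, b, c, d} := by ext; simp
  rw [hcoe]
  exact convexPos_latticePt_iff (hl.sublist hsub) (hgen.mono fun x hx => hsub.subset hx)

def pts : List (ℤ × ℤ) :=
  [(400, 400), (-800, 0), (400, -400), (384, -342), (321, 363), (-705, -21), (391, -373),
    (364, 382), (-755, -9), (385, -371), (364, 378), (-749, -7), (332, 242), (-529, 45),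
    (197, -287), (395, -387), (383, 391), (-778, -4), (381, 389), (-774, -4), (393, -385),
    (391, 395), (-788, -2), (397, -393)]

lemma pts_nodup : pts.Nodup := by decide +kernel

lemma genPosZ_pts : GenPosZ {x | x ∈ pts} := by
  simp only [GenPosZ, Set.mem_ofPred_eq]
  decide +kernel

lemma zero_notMem_pts : (0 : ℤ × ℤ) ∉ pts := by decide +kernel

lemma pts_rot120_closed :
    ∀ p ∈ pts, ∃ q ∈ pts, 2 * q.1 = -p.1 - 3 * p.2 ∧ 2 * q.2 = p.1 - p.2 := by
  decide +kernel

lemma countP_convexQuadZ_pts : (pts.sublistsLen 4).countP convexQuadZ = 3699 := by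
  decide +kernel

/-- There is a 3-symmetric set of 24 points in general position with exactly 3699 convex
quadrilaterals; in particular the rectilinear crossing number of `K_24` is at most 3699. -/
theorem exists_good_drawing_K24 :
    ∃ P : Finset (ℝ × ℝ), P.card = 24 ∧ GenPos P ∧ ThreeSym P ∧ crNum P = 3699 ∧
      rcn 24 ≤ 3699 := by
  set P := pts.toFinset.image latticePt
  have hcard : P.card = 24 := by
    rw [Finset.card_image_of_injective _ latticePt_injective, List.toFinset_card_of_nodup pts_nodup]
    rfl
  have hgen : GenPos P := genPos_image_latticePt (by simpa using genPosZ_pts)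
  have hsym : ThreeSym P :=
    threeSym_image_latticePt (by simpa using zero_notMem_pts) (by simpa using pts_rot120_closed)
  have hcr : crNum P = 3699 := by
    rw [crNum_image_latticePt pts_nodup genPosZ_pts, countP_convexQuadZ_pts]
  exact ⟨P, hcard, hgen, hsym, hcr, Nat.sInf_le ⟨P, hcard, hgen, hcr⟩⟩
end
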